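/- arXiv:2007.02183 — 4 statements merged into one kernel-verified Lean document; each statement's English description precedes it below -/
import Mathlib

section
/- If (a_k) and (b_k) are sequences of positive integers both tending to infinity such that a_k / b_k converges to a real number c > 0, then (log a_k!) / (log b_k!) converges to c. -/
/-!
Since `n log n - n ≤ log n! ≤ n log n`, we have `log n! ~ n log n`. If `a_k / b_k → c > 0` then
`log a_k - log b_k → log c` is bounded, so `log a_k ~ log b_k`. Hence
`log a_k! / log b_k! ~ (a_k / b_k) · (log a_k / log b_k) → c · 1`.
-/

open Filter Asymptotics Real Topology
open scoped Nat

lemma log_factorial_le_mul_log (n : ℕ) : log n ! ≤ n * log n := by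
  rw [← log_pow]
  exact log_le_log (by positivity) (by exact_mod_cast n.factorial_le_pow)

lemma mul_log_sub_le_log_factorial (n : ℕ) : n * log n - n ≤ log n ! := by
  rcases Nat.eq_zero_or_pos n with rfl | hn
  · simp
  have hpow : (n : ℝ) ^ n ≤ n ! * exp n := by
    have := pow_div_factorial_le_exp (x := n) (Nat.cast_nonneg n) n
    rwa [div_le_iff₀ (by positivity), mul_comm] at this
  have := log_le_log (by positivity) hpow
  rwa [log_pow, log_mul (by positivity) (exp_ne_zero _), log_exp, ← sub_le_iff_le_add] at this

lemma isEquivalent_log_factorial : (fun n : ℕ => log n !) ~[atTop] fun n => n * log n := by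
  refine IsLittleO.isEquivalent (IsBigO.trans_isLittleO (g := fun n : ℕ => (n : ℝ)) ?_ ?_)
  · refine IsBigO.of_bound 1 (Eventually.of_forall fun n => ?_)
    have h_upper := log_factorial_le_mul_log n
    have h_lower := mul_log_sub_le_log_factorial n
    rw [norm_eq_abs, norm_eq_abs, abs_le, abs_of_nonneg (Nat.cast_nonneg n)]
    constructor <;> simp only [Pi.sub_apply] <;> linarith
  · simpa using (isBigO_refl (fun n : ℕ => (n : ℝ)) atTop).mul_isLittleO
      (isLittleO_const_log_atTop (c := 1)).natCast_atTop

lemma isEquivalent_log_of_tendsto_div {α : Type*} {l : Filter α} {u v : α → ℝ} {c : ℝ}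
    (hc : 0 < c) (hv : Tendsto v l atTop) (huv : Tendsto (u / v) l (𝓝 c)) :
    (fun x => log (u x)) ~[l] fun x => log (v x) := by
  have hlog_div : (fun x => log (u x) - log (v x)) =ᶠ[l] fun x => log ((u / v) x) := by
    filter_upwards [hv.eventually_gt_atTop 0, huv.eventually (lt_mem_nhds hc)] with x hvx huvx
    have hux : 0 < u x := (div_pos_iff_of_pos_right hvx).mp huvx
    rw [Pi.div_apply, log_div hux.ne' hvx.ne']
  have hbounded : (fun x => log ((u / v) x)) =O[l] fun _ => (1 : ℝ) :=
    ((continuousAt_log hc.ne').tendsto.comp huv).isBigO_one ℝ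
  have hlog_v : (fun _ => (1 : ℝ)) =o[l] fun x => log (v x) :=
    isLittleO_const_log_atTop.comp_tendsto hv
  exact IsLittleO.isEquivalent <|
    (hbounded.congr' hlog_div.symm EventuallyEq.rfl).trans_isLittleO hlog_v

theorem log_factorial_ratio_tendsto_general
    (a b : ℕ → ℕ)
    (hatop : Tendsto a atTop atTop) (hbtop : Tendsto b atTop atTop)
    (c : ℝ) (hc : 0 < c)
    (hratio : Tendsto (fun k => (a k : ℝ) / (b k : ℝ)) atTop (nhds c)) :
    Tendsto (fun k => Real.log (Nat.factorial (a k)) / Real.log (Nat.factorial (b k)))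
      atTop (nhds c) := by
  have hb_real : Tendsto (fun k => (b k : ℝ)) atTop atTop :=
    tendsto_natCast_atTop_atTop.comp hbtop
  have hlog : (fun k => log (a k : ℝ)) ~[atTop] fun k => log (b k : ℝ) :=
    isEquivalent_log_of_tendsto_div hc hb_real hratio
  have hlog_ratio : Tendsto (fun k => log (a k : ℝ) / log (b k)) atTop (𝓝 1) :=
    (isEquivalent_iff_tendsto_one <|
      (tendsto_log_atTop.comp hb_real).eventually_ne_atTop 0).mp hlog
  have hfactorial := (isEquivalent_log_factorial.comp_tendsto hatop).div
    (isEquivalent_log_factorial.comp_tendsto hbtop)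
  refine hfactorial.symm.tendsto_nhds ?_
  convert hratio.mul hlog_ratio using 1
  · ext k
    simp only [Pi.div_apply, Function.comp_apply, mul_div_mul_comm]
  · rw [mul_one]

/-- If `(a_k)` and `(b_k)` are sequences of positive integers tending to infinity with
`a_k / b_k → c > 0`, then `log(a_k!) / log(b_k!) → c`. -/
theorem log_factorial_ratio_tendsto
    (a b : ℕ → ℕ) (ha : ∀ k, 0 < a k) (hb : ∀ k, 0 < b k)
    (hatop : Tendsto a atTop atTop) (hbtop : Tendsto b atTop atTop)
    (c : ℝ) (hc : 0 < c)
    (hratio : Tendsto (fun k => (a k : ℝ) / (b k : ℝ)) atTop (nhds c)) :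
    Tendsto (fun k => Real.log (Nat.factorial (a k)) / Real.log (Nat.factorial (b k)))
      atTop (nhds c) :=
  log_factorial_ratio_tendsto_general a b hatop hbtop c hc hratio
end

section
/- Let 𝒫 be a class of finite groups closed under isomorphism and let (G,g) and (H,h) be leveled groups whose local 𝒫 entropies exist. If i : (H,h) → (G,g) is a leveled monomorphism (an injective group homomorphism with i(h) = g), then h_𝒫(H,h) ≤ h_𝒫(G,g). -/
open Filter

universe u

/-- A subgroup `H` of `G` is `g`-locally `𝒫`, for a class `𝒫` of (finite) groups closed
under isomorphism: (1) `H ∩ C(g^j)` is finite for all `j ≥ 1`; (2) `H ∩ C(g^j)` belongs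
to `𝒫` for all sufficiently large `j`; (3) `H ∩ C(g) ≠ {e}`. -/
def IsLocallyP {G : Type u} [Group G] (P : (S : Type u) → [Group S] → Prop)
    (g : G) (H : Subgroup G) : Prop :=
  (∀ j : ℕ, 1 ≤ j → Finite ↥(H ⊓ Subgroup.centralizer {g ^ j})) ∧
  (∃ J : ℕ, ∀ j : ℕ, J ≤ j → P ↥(H ⊓ Subgroup.centralizer {g ^ j})) ∧
  H ⊓ Subgroup.centralizer {g} ≠ ⊥

/-- The local `𝒫` entropy of a leveled group `(G, g)`:
`h_𝒫(G,g) = sup_H limsup_n (1/n) log log |H ∩ C(g^n)|`, the supremum ranging over all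
`g`-locally `𝒫` subgroups `H` of `G` (computed in the extended reals). -/
noncomputable def localPEntropy {G : Type u} [Group G]
    (P : (S : Type u) → [Group S] → Prop) (g : G) : EReal :=
  ⨆ H : {H : Subgroup G // IsLocallyP P g H},
    atTop.limsup (fun n : ℕ =>
      ((Real.log (Real.log
        (Nat.card ↥((H : Subgroup G) ⊓ Subgroup.centralizer {g ^ n}))) / n : ℝ) : EReal))

/-- Monotonicity of local `𝒫` entropy under leveled monomorphisms: if `𝒫` is a class of
finite groups closed under isomorphism, `(G,g)` and `(H,h)` are leveled groups whose local
`𝒫` entropies exist, and `i : (H,h) → (G,g)` is an injective homomorphism with `i(h) = g`,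
then `h_𝒫(H,h) ≤ h_𝒫(G,g)`. -/
theorem localPEntropy_le_of_leveled_mono
    {G H : Type u} [Group G] [Group H]
    (P : (S : Type u) → [Group S] → Prop)
    (hPfin : ∀ (S : Type u) [Group S], P S → Finite S)
    (hPiso : ∀ (S₁ S₂ : Type u) [Group S₁] [Group S₂], (S₁ ≃* S₂) → P S₁ → P S₂)
    (g : G) (h : H) (hg : ¬ IsOfFinOrder g) (hh : ¬ IsOfFinOrder h)
    (hGex : ∃ K : Subgroup G, IsLocallyP P g K)
    (hHex : ∃ K : Subgroup H, IsLocallyP P h K)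
    (i : H →* G) (hinj : Function.Injective i) (hlev : i h = g) :
    localPEntropy P h ≤ localPEntropy P g := by
  have key : ∀ (K : Subgroup H) (n : ℕ),
      Subgroup.map i K ⊓ Subgroup.centralizer {g ^ n}
        = Subgroup.map i (K ⊓ Subgroup.centralizer {h ^ n}) := by
    intro K n
    have hgn : g ^ n = i (h ^ n) := by rw [← hlev, map_pow]
    ext y
    simp only [Subgroup.mem_inf, Subgroup.mem_map, Subgroup.mem_centralizer_iff,
      Set.mem_singleton_iff, forall_eq, hgn]
    constructor
    · rintro ⟨⟨x, hxK, rfl⟩, hc⟩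
      refine ⟨x, ⟨hxK, ?_⟩, rfl⟩
      apply hinj
      simpa [map_mul] using hc
    · rintro ⟨x, ⟨hxK, hc⟩, rfl⟩
      exact ⟨⟨x, hxK, rfl⟩, by rw [← map_mul, hc, map_mul]⟩
  have hcard : ∀ (K : Subgroup H) (n : ℕ),
      Nat.card ↥(K ⊓ Subgroup.centralizer {h ^ n})
        = Nat.card ↥(Subgroup.map i K ⊓ Subgroup.centralizer {g ^ n}) := by
    intro K n
    rw [key]
    exact Nat.card_congr (Subgroup.equivMapOfInjective _ i hinj).toEquiv
  apply iSup_le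
  rintro ⟨K, hK1, ⟨J, hK2⟩, hK3⟩
  have hmap : IsLocallyP P g (Subgroup.map i K) := by
    refine ⟨?_, ⟨J, ?_⟩, ?_⟩
    · intro j hj
      rw [key]
      have := hK1 j hj
      exact Finite.of_equiv _ (Subgroup.equivMapOfInjective _ i hinj).toEquiv
    · intro j hj
      rw [key]
      exact hPiso _ _ (Subgroup.equivMapOfInjective _ i hinj) (hK2 j hj)
    · have : Subgroup.map i K ⊓ Subgroup.centralizer {g}
          = Subgroup.map i (K ⊓ Subgroup.centralizer {h}) := by
        simpa [pow_one] using key K 1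
      rw [this]
      intro hbot
      exact hK3 ((Subgroup.map_eq_bot_iff_of_injective _ hinj).mp hbot)
  refine le_trans (le_of_eq ?_) (le_iSup _ (⟨Subgroup.map i K, hmap⟩ :
    {H' : Subgroup G // IsLocallyP P g H'}))
  congr 1
  funext n
  rw [hcard K n]
end

section
/- Let G be a group and σ ∈ G of infinite order such that: (a) every γ ∈ G with γ^a = σ^b (a,b ≠ 0) generates a ghost center, (b) there is a uniform bound on root orders, i.e. for each j ≠ 0 there is k(j) with γ^k = σ^j implying |k| ≤ k(j). Suppose G₂ is another group with an element σ₂ with the analogous property that every generator of a maximal cyclic ghost center γ satisfies γ^c = σ₂^d for some c,d ≠ 0. Then any group isomorphism Ψ : G → G₂ satisfies Ψ(σ^k) = σ₂^j for some nonzero integers k, j. -/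
/-- A ghost center of a group `G` is a subgroup `H` such that `H ∩ C(K) ≠ {e}` for every
finitely generated subgroup `K ≤ G`. -/
def IsGhostCenter {G : Type*} [Group G] (H : Subgroup G) : Prop :=
  ∀ K : Subgroup G, K.FG → H ⊓ Subgroup.centralizer (K : Set G) ≠ ⊥

/-- A maximal cyclic ghost center: a cyclic ghost center not properly contained in any
other cyclic ghost center. -/
def IsMaximalCyclicGhostCenter {G : Type*} [Group G] (H : Subgroup G) : Prop :=
  IsGhostCenter H ∧ IsCyclic ↥H ∧
    ∀ H' : Subgroup G, IsGhostCenter H' → IsCyclic ↥H' → H ≤ H' → H = H'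

lemma zpowers_isCyclic {G : Type*} [Group G] (a : G) :
    IsCyclic ↥(Subgroup.zpowers a) := by
  refine ⟨⟨⟨a, Subgroup.mem_zpowers a⟩, ?_⟩⟩
  rintro ⟨x, hx⟩
  obtain ⟨n, hn⟩ := Subgroup.mem_zpowers_iff.mp hx
  refine Subgroup.mem_zpowers_iff.mpr ⟨n, ?_⟩
  ext
  simpa using hn

/-- Being a ghost center transfers along a group isomorphism. -/
lemma ghost_map {G G₂ : Type*} [Group G] [Group G₂] (e : G ≃* G₂) (γ : G)
    (h : IsGhostCenter (Subgroup.zpowers γ)) :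
    IsGhostCenter (Subgroup.zpowers (e γ)) := by
  intro K₂ hK₂ hbot
  have hK : (K₂.comap (e : G →* G₂)).FG := by
    obtain ⟨s, hs, hfin⟩ := (Subgroup.fg_iff _).mp hK₂
    refine (Subgroup.fg_iff _).mpr ⟨(e.symm : G₂ →* G) '' s, ?_, hfin.image _⟩
    rw [Subgroup.comap_equiv_eq_map_symm, ← hs, MonoidHom.map_closure]
  apply h _ hK
  rw [Subgroup.eq_bot_iff_forall] at hbot ⊢
  intro x hx
  rw [Subgroup.mem_inf] at hx
  obtain ⟨hx1, hx2⟩ := hx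
  obtain ⟨n, hn⟩ := Subgroup.mem_zpowers_iff.mp hx1
  have hex : e x = 1 := by
    apply hbot
    rw [Subgroup.mem_inf]
    constructor
    · exact Subgroup.mem_zpowers_iff.mpr ⟨n, by rw [← hn, map_zpow]⟩
    · rw [Subgroup.mem_centralizer_iff]
      intro g hg
      have hg' : e.symm g ∈ K₂.comap (e : G →* G₂) := by
        rw [Subgroup.mem_comap]
        simpa using hg
      have hcomm := Subgroup.mem_centralizer_iff.mp hx2 (e.symm g) hg'
      have := congrArg e hcomm
      simpa using this
  simpa using congrArg e.symm hex

/-- Abstract form of Lemma 4.12: let `σ ∈ G` have infinite order, suppose (a) every root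
`γ` of a power of `σ` (i.e. `γ^a = σ^b` with `a, b ≠ 0`) generates a ghost center, and
(b) for each `j ≠ 0` the exponents `k` with `γ^k = σ^j` are uniformly bounded.  Let
`σ₂ ∈ G₂` be such that every generator of a maximal cyclic ghost center of `G₂` is a root
of a power of `σ₂`.  Then any isomorphism `Ψ : G → G₂` carries some nonzero power of `σ`
to a nonzero power of `σ₂`. -/
theorem iso_maps_power_to_power
    {G G₂ : Type*} [Group G] [Group G₂]
    (σ : G) (hσ : ¬ IsOfFinOrder σ)
    (ha : ∀ γ : G, (∃ a b : ℤ, a ≠ 0 ∧ b ≠ 0 ∧ γ ^ a = σ ^ b) →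
      IsGhostCenter (Subgroup.zpowers γ))
    (hb : ∀ j : ℤ, j ≠ 0 → ∃ k₀ : ℕ, ∀ (γ : G) (k : ℤ), γ ^ k = σ ^ j → k.natAbs ≤ k₀)
    (σ₂ : G₂)
    (h₂ : ∀ γ : G₂, IsMaximalCyclicGhostCenter (Subgroup.zpowers γ) →
      ∃ c d : ℤ, c ≠ 0 ∧ d ≠ 0 ∧ γ ^ c = σ₂ ^ d)
    (Ψ : G ≃* G₂) :
    ∃ k j : ℤ, k ≠ 0 ∧ j ≠ 0 ∧ Ψ (σ ^ k) = σ₂ ^ j := by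
  have hσ1 : σ ≠ 1 := by
    rintro rfl; exact hσ IsOfFinOrder.one
  -- the set of |exponents| of roots of σ
  set S : Set ℕ := {n | ∃ γ : G, ∃ m : ℤ, m.natAbs = n ∧ γ ^ m = σ} with hSdef
  have hne : S.Nonempty := ⟨1, σ, 1, rfl, zpow_one σ⟩
  obtain ⟨k₀, hk₀⟩ := hb 1 one_ne_zero
  have hbdd : BddAbove S := by
    refine ⟨k₀, ?_⟩
    rintro n ⟨γ, m, hmn, hm⟩
    exact hmn ▸ hk₀ γ m (by rw [hm, zpow_one])
  obtain ⟨γ, m, hmn, hm⟩ := Nat.sSup_mem hne hbdd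
  have hm0 : m ≠ 0 := by
    rintro rfl
    rw [zpow_zero] at hm
    exact hσ1 hm.symm
  have hg : IsGhostCenter (Subgroup.zpowers γ) :=
    ha γ ⟨m, 1, hm0, one_ne_zero, by rw [hm, zpow_one]⟩
  -- zpowers (Ψ γ) is a maximal cyclic ghost center of G₂
  have hmax : IsMaximalCyclicGhostCenter (Subgroup.zpowers (Ψ γ)) := by
    refine ⟨ghost_map Ψ γ hg, zpowers_isCyclic _, ?_⟩
    intro H' _ hH'c hle
    obtain ⟨g, hgen⟩ := hH'c
    have hH' : H' = Subgroup.zpowers (g : G₂) := by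
      apply le_antisymm
      · intro x hx
        obtain ⟨n, hn⟩ := Subgroup.mem_zpowers_iff.mp (hgen ⟨x, hx⟩)
        refine Subgroup.mem_zpowers_iff.mpr ⟨n, ?_⟩
        have := congrArg (Subtype.val) hn
        simpa using this
      · exact Subgroup.zpowers_le.mpr g.2
    -- Ψ γ = g ^ t
    have hΨγ : Ψ γ ∈ Subgroup.zpowers (g : G₂) := by
      rw [← hH']; exact hle (Subgroup.mem_zpowers _)
    obtain ⟨t, ht⟩ := Subgroup.mem_zpowers_iff.mp hΨγ
    set γ' : G := Ψ.symm (g : G₂) with hγ'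
    have hγ't : γ' ^ t = γ := by
      have := congrArg Ψ.symm ht
      simpa [map_zpow] using this
    have hσγ' : γ' ^ (t * m) = σ := by
      rw [zpow_mul, hγ't, hm]
    have htm : (t * m).natAbs ∈ S := ⟨γ', t * m, rfl, hσγ'⟩
    have hle' : (t * m).natAbs ≤ m.natAbs := hmn ▸ le_csSup hbdd htm
    have ht0 : t ≠ 0 := by
      rintro rfl
      rw [zero_mul, zpow_zero] at hσγ'
      exact hσ1 hσγ'.symm
    have ht1 : t.natAbs = 1 := by
      rw [Int.natAbs_mul] at hle'
      have hm' : 0 < m.natAbs := Int.natAbs_pos.mpr hm0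
      nlinarith [Int.natAbs_pos.mpr ht0]
    have : t = 1 ∨ t = -1 := Int.natAbs_eq_iff.mp ht1 |>.imp (by simp) (by simp)
    -- show H' ≤ zpowers (Ψ γ)
    apply le_antisymm hle
    rw [hH', Subgroup.zpowers_le]
    rcases this with rfl | rfl
    · rw [zpow_one] at hγ't
      have : (g : G₂) = Ψ γ := by rw [← hγ't]; simp [hγ']
      rw [this]; exact Subgroup.mem_zpowers _
    · have : (g : G₂) = (Ψ γ)⁻¹ := by
        have h1 : γ' = γ⁻¹ := by rw [← hγ't]; simp
        have := congrArg Ψ h1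
        simpa [hγ'] using this
      rw [this]
      exact Subgroup.inv_mem _ (Subgroup.mem_zpowers _)
  obtain ⟨c, d, hc, hd, hcd⟩ := h₂ (Ψ γ) hmax
  refine ⟨c, d * m, hc, mul_ne_zero hd hm0, ?_⟩
  rw [← hm, ← zpow_mul, map_zpow, mul_comm m c, zpow_mul, hcd, ← zpow_mul]
end

section
/- Let λ > 1 be a real number and k a positive integer. Then limsup_{n→∞} (1/n) log log(⌊λ^{kn}⌋!) = k log λ. -/
/-!
Stirling's bound `log N! ≥ N log N - N` and the trivial bound `N! ≤ N ^ N` give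
`log N ≤ log log N! ≤ log N + log log N` for large `N`, so `log log N! ~ log N`.
For `N = ⌊λ^{kn}⌋` the floor costs at most `log 2`, hence `log N / n → k log λ`.
-/

open Filter Topology Real

open scoped Nat

lemma log_le_log_log_factorial {N : ℕ} (hN : 2 ≤ log N) : log N ≤ log (log N !) := by
  have hN0 : N ≠ 0 := by rintro rfl; norm_num at hN
  have hN1 : (1 : ℝ) ≤ N := by exact_mod_cast Nat.one_le_iff_ne_zero.mpr hN0
  have hstirling := Stirling.le_log_factorial_stirling hN0
  have hpi : 0 ≤ log (2 * π) := log_nonneg (by linarith [pi_gt_three])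
  have hN_le : (N : ℝ) ≤ log N ! := by nlinarith [log_nonneg hN1]
  exact log_le_log (by positivity) hN_le

lemma log_log_factorial_le {N : ℕ} (hN : 2 ≤ N) :
    log (log N !) ≤ log N + log (log N) := by
  have hN1 : (1 : ℝ) < N := by exact_mod_cast hN
  have hfac1 : (1 : ℝ) < N ! := by
    exact_mod_cast hN.trans_lt' one_lt_two |>.trans_le (Nat.self_le_factorial N)
  have hlog_fac : log N ! ≤ N * log N := by
    rw [← log_pow]
    exact log_le_log (by positivity) (by exact_mod_cast Nat.factorial_le_pow N)
  calc log (log N !) ≤ log (N * log N) := log_le_log (log_pos hfac1) hlog_fac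
    _ = log N + log (log N) := log_mul (by positivity) (log_pos hN1).ne'

lemma tendsto_log_log_factorial_div_log :
    Tendsto (fun N : ℕ => log (log N !) / log N) atTop (𝓝 1) := by
  have hlog : Tendsto (fun N : ℕ => log N) atTop atTop :=
    tendsto_log_atTop.comp tendsto_natCast_atTop_atTop
  have hupper : Tendsto (fun N : ℕ => 1 + log (log N) / log N) atTop (𝓝 1) := by
    simpa using (isLittleO_log_id_atTop.tendsto_div_nhds_zero.comp hlog).const_add 1
  refine tendsto_of_tendsto_of_tendsto_of_le_of_le' tendsto_const_nhds hupper ?_ ?_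
  all_goals filter_upwards [hlog.eventually_ge_atTop 2, eventually_ge_atTop 2] with N hN hN2
  · rw [le_div_iff₀ (by positivity), one_mul]
    exact log_le_log_log_factorial hN
  · rw [div_le_iff₀ (by positivity), add_mul, one_mul, div_mul_cancel₀ _ (by positivity)]
    exact log_log_factorial_le hN2

lemma log_sub_log_two_le_log_natFloor {x : ℝ} (hx : 1 ≤ x) : log x - log 2 ≤ log ⌊x⌋₊ := by
  rw [← log_div (by positivity) two_ne_zero]
  exact log_le_log (by positivity) (Nat.div_two_lt_floor hx).le

lemma tendsto_log_natFloor_pow_div {a : ℝ} (ha : 1 < a) :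
    Tendsto (fun n : ℕ => log ⌊a ^ n⌋₊ / n) atTop (𝓝 (log a)) := by
  have hlower : Tendsto (fun n : ℕ => log a - log 2 / n) atTop (𝓝 (log a)) := by
    simpa using (tendsto_const_div_atTop_nhds_zero_nat (log 2)).const_sub (log a)
  refine tendsto_of_tendsto_of_tendsto_of_le_of_le' hlower tendsto_const_nhds ?_ ?_
  all_goals filter_upwards [eventually_gt_atTop 0] with n hn
  all_goals have hn' : (0 : ℝ) < n := by exact_mod_cast hn
  all_goals have hpow : 1 ≤ a ^ n := one_le_pow₀ ha.le
  · calc log a - log 2 / n = (log (a ^ n) - log 2) / n := by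
          rw [log_pow]; field_simp
      _ ≤ log ⌊a ^ n⌋₊ / n := by gcongr; exact log_sub_log_two_le_log_natFloor hpow
  · calc log ⌊a ^ n⌋₊ / n ≤ log (a ^ n) / n := by
          gcongr
          · exact_mod_cast Nat.floor_pos.mpr hpow
          · exact Nat.floor_le (by positivity)
      _ = log a := by rw [log_pow]; field_simp

/-- For a real number `λ > 1` and a positive integer `k`,
`limsup_{n→∞} (1/n) · log log(⌊λ^{kn}⌋!) = k · log λ`. -/
theorem limsup_loglog_factorial_floor_pow
    (lam : ℝ) (hlam : 1 < lam) (k : ℕ) (hk : 0 < k) :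
    atTop.limsup (fun n : ℕ =>
        Real.log (Real.log (Nat.factorial ⌊lam ^ (k * n)⌋₊)) / n) =
      (k : ℝ) * Real.log lam := by
  have hlamk : 1 < lam ^ k := one_lt_pow₀ hlam hk.ne'
  have hfloor : Tendsto (fun n : ℕ => ⌊(lam ^ k) ^ n⌋₊) atTop atTop :=
    tendsto_nat_floor_atTop.comp (tendsto_pow_atTop_atTop_of_one_lt hlamk)
  have hlim := (tendsto_log_log_factorial_div_log.comp hfloor).mul
    (tendsto_log_natFloor_pow_div hlamk)
  rw [one_mul, log_pow] at hlim
  refine (hlim.congr' ?_).limsup_eq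
  filter_upwards [hfloor.eventually_ge_atTop 2] with n hn
  have hlog : log ⌊(lam ^ k) ^ n⌋₊ ≠ 0 := (log_pos (by exact_mod_cast hn)).ne'
  simp only [Function.comp_apply, pow_mul]
  field_simp
end
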